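/- With θ the Coxeter transformation of the Tamari posets, for every tree T of degree n one has θ(T/Y) = (-1)ⁿ Y\θ⁻¹(T), where Y is the tree with one internal vertex. -/

import Mathlib

/-- Planar binary trees (full binary trees). -/
inductive PBT : Type
  | leaf : PBT
  | node : PBT → PBT → PBT
  deriving DecidableEq

namespace PBT

/-- Degree: number of internal (trivalent) vertices. -/
def deg : PBT → ℕ
  | leaf => 0
  | node l r => deg l + deg r + 1

/-- `graftL S T = S/T`: graft the root of `S` onto the leftmost leaf of `T`. -/
def graftL (S : PBT) : PBT → PBT
  | leaf => S
  | node l r => node (graftL S l) r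

/-- `graftR S T = S\T`: graft the root of `T` onto the rightmost leaf of `S`. -/
def graftR : PBT → PBT → PBT
  | leaf, T => T
  | node l r, T => node l (graftR r T)

/-- The unique tree with one internal vertex. -/
def Y : PBT := node leaf leaf

/-- One right rotation somewhere in the tree: the Tamari covering relation. -/
inductive rot : PBT → PBT → Prop
  | rotate (A B C : PBT) : rot (node (node A B) C) (node A (node B C))
  | left {S S' : PBT} (T : PBT) : rot S S' → rot (node S T) (node S' T)
  | right (S : PBT) {T T' : PBT} : rot T T' → rot (node S T) (node S T')

/-- The Tamari order: reflexive transitive closure of right rotations. -/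
def tamari : PBT → PBT → Prop := Relation.ReflTransGen rot

/-- Left-right reversal. -/
def rev : PBT → PBT
  | leaf => leaf
  | node l r => node (rev r) (rev l)

/-- The left comb of degree `n`. -/
def leftComb : ℕ → PBT
  | 0 => leaf
  | n + 1 => node (leftComb n) leaf

/-- The right comb of degree `n`. -/
def rightComb : ℕ → PBT
  | 0 => leaf
  | n + 1 => node leaf (rightComb n)

end PBT

/-- Trees of degree `n`. -/
abbrev PBTdeg (n : ℕ) := {T : PBT // T.deg = n}

open Classical in
/-- Incidence matrix of the Tamari order in degree `n`. -/
noncomputable def Lmat (n : ℕ) [Fintype (PBTdeg n)] : Matrix (PBTdeg n) (PBTdeg n) ℚ :=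
  Matrix.of fun v w => if PBT.tamari v.1 w.1 then 1 else 0

/-- Coxeter transformation `θ = -L (Lᵗ)⁻¹` of the Tamari poset of degree `n`. -/
noncomputable def thetaMat (n : ℕ) [Fintype (PBTdeg n)] : Matrix (PBTdeg n) (PBTdeg n) ℚ :=
  -(Lmat n * ((Lmat n).transpose)⁻¹)

/-- Basis vector of a tree `T` in the free vector space on trees of degree `n`. -/
def delta (n : ℕ) (T : PBT) : PBTdeg n → ℚ := fun U => if U.1 = T then 1 else 0

open Classical in
/-- Bilinear extension of the dendriform product `S * T = ∑_{S/T ≤ U ≤ S\T} U`. -/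
noncomputable def dprod {n₁ n₂ : ℕ} [Fintype (PBTdeg n₁)] [Fintype (PBTdeg n₂)]
    (f : PBTdeg n₁ → ℚ) (g : PBTdeg n₂ → ℚ) : PBTdeg (n₁ + n₂) → ℚ :=
  fun U => ∑ S₁ : PBTdeg n₁, ∑ S₂ : PBTdeg n₂,
    f S₁ * g S₂ *
      (if PBT.tamari (PBT.graftL S₁.1 S₂.1) U.1 ∧ PBT.tamari U.1 (PBT.graftR S₁.1 S₂.1)
        then 1 else 0)

open Classical in
/-- Bilinear extension of the left grafting `/`. -/
noncomputable def gprodL {n₁ n₂ : ℕ} [Fintype (PBTdeg n₁)] [Fintype (PBTdeg n₂)]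
    (f : PBTdeg n₁ → ℚ) (g : PBTdeg n₂ → ℚ) : PBTdeg (n₁ + n₂) → ℚ :=
  fun U => ∑ S₁ : PBTdeg n₁, ∑ S₂ : PBTdeg n₂,
    f S₁ * g S₂ * (if U.1 = PBT.graftL S₁.1 S₂.1 then 1 else 0)
open Classical in
/-- Linear extension of `f ↦ Y\f` from degree `n` to degree `n+1`. -/
noncomputable def Ygr (n : ℕ) [Fintype (PBTdeg n)] (f : PBTdeg n → ℚ) : PBTdeg (n + 1) → ℚ :=
  fun U => ∑ S : PBTdeg n, f S * (if U.1 = PBT.graftR PBT.Y S.1 then 1 else 0)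

/-!
Write `P` and `G` for the matrices of `T ↦ T/Y` and `T ↦ Y\T`. The interval below `T/Y`
(above `Y\T`) is the image of the interval below (above) `T`, so `L P = P L` and
`Lᵗ G = G Lᵗ`. With `θ = -L (Lᵗ)⁻¹`, the claim `θ P = (-1)ⁿ G θ⁻¹` then follows from the
existence of a matrix `K` with `Lᵗ K = L P` and `L K = (-1)ⁿ Lᵗ G`, i.e. `K = (Lᵗ)⁻¹ L P`.
Its columns obey `K(node A B) = K(A)/K(B) - K(A)\K(B)`, and both identities are
proved by induction on the tree: a tree `U` of degree `a + b` splits as `S/T ≤ U ≤ S\T` with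
`deg S = a`, and comparing `U` with `S'/T'` or `S'\T'` amounts to comparing the two pieces.
-/

theorem Matrix.BlockTriangular.det_eq_one {α m R : Type*} [LinearOrder α] [Fintype m]
    [DecidableEq m] [CommRing R] {M : Matrix m m R} {b : m → α} (hM : M.BlockTriangular b)
    (hdiag : ∀ i j, b i = b j → M i j = (1 : Matrix m m R) i j) : M.det = 1 := by
  rw [hM.det]
  refine Finset.prod_eq_one fun k _ => ?_
  have hblock : M.toSquareBlock b k = 1 := by
    ext i j
    rw [Matrix.toSquareBlock_def, Matrix.of_apply, hdiag i j (i.2.trans j.2.symm)]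
    simp [Matrix.one_apply, Subtype.ext_iff]
  rw [hblock, Matrix.det_one]

theorem coxeter_mul_eq_smul_mul_inv {ι κ R : Type*} [Fintype ι] [DecidableEq ι] [Fintype κ]
    [DecidableEq κ] [CommRing R] {L₁ : Matrix ι ι R} {L₀ : Matrix κ κ R} {P G K : Matrix ι κ R}
    {c : R} (h₁ : IsUnit L₁.det) (h₀ : IsUnit L₀.det) (hK : L₁.transpose * K = L₁ * P)
    (hK' : L₁ * K = c • (L₁.transpose * G)) (hP : L₁ * P = P * L₀)
    (hG : L₁.transpose * G = G * L₀.transpose) :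
    -(L₁ * L₁.transpose⁻¹) * P = c • (G * (-(L₀ * L₀.transpose⁻¹))⁻¹) := by
  have hT₁ : IsUnit L₁.transpose.det := by rwa [Matrix.det_transpose]
  have hT₀ : IsUnit L₀.transpose.det := by rwa [Matrix.det_transpose]
  have hinv : (-(L₀ * L₀.transpose⁻¹))⁻¹ = -(L₀.transpose * L₀⁻¹) := by
    refine Matrix.inv_eq_right_inv ?_
    rw [neg_mul_neg, Matrix.mul_assoc, Matrix.nonsing_inv_mul_cancel_left _ _ hT₀,
      Matrix.mul_nonsing_inv _ h₀]
  have hmul : L₁ * L₁.transpose⁻¹ * P * L₀ = c • (G * L₀.transpose) := by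
    calc L₁ * L₁.transpose⁻¹ * P * L₀ = L₁ * (L₁.transpose⁻¹ * (L₁.transpose * K)) := by
          rw [hK, hP]; simp only [Matrix.mul_assoc]
      _ = L₁ * K := by rw [Matrix.nonsing_inv_mul_cancel_left _ _ hT₁]
      _ = c • (G * L₀.transpose) := by rw [hK', hG]
  rw [hinv, Matrix.mul_neg, smul_neg, Matrix.neg_mul, neg_inj, ← Matrix.mul_assoc,
    ← Matrix.smul_mul, ← hmul, Matrix.mul_nonsing_inv_cancel_right _ _ h₀]

namespace PBT

theorem eq_leaf_of_deg_eq_zero {T : PBT} (h : T.deg = 0) : T = leaf := by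
  cases T with
  | leaf => rfl
  | node l r => simp [deg] at h

theorem eq_Y_of_deg_eq_one {T : PBT} (h : T.deg = 1) : T = Y := by
  cases T with
  | leaf => simp [deg] at h
  | node l r =>
    simp only [deg, Nat.add_eq_right, Nat.add_eq_zero_iff] at h
    rw [Y, eq_leaf_of_deg_eq_zero h.1, eq_leaf_of_deg_eq_zero h.2]

theorem deg_graftL (S T : PBT) : (graftL S T).deg = S.deg + T.deg := by
  induction T with
  | leaf => simp [graftL, deg]
  | node l r ihl => simp only [graftL, deg, ihl]; omega

theorem deg_graftR (S T : PBT) : (graftR S T).deg = S.deg + T.deg := by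
  induction S with
  | leaf => simp [graftR, deg]
  | node l r _ ihr => simp only [graftR, deg, ihr]; omega

theorem rot.deg_eq {U V : PBT} (h : rot U V) : U.deg = V.deg := by
  induction h <;> simp only [deg] <;> omega

theorem rot.graftL_left {S S' : PBT} (T : PBT) (h : rot S S') :
    rot (graftL S T) (graftL S' T) := by
  induction T with
  | leaf => exact h
  | node l r ihl => exact rot.left r ihl

theorem rot.graftL_right (S : PBT) {T T' : PBT} (h : rot T T') :
    rot (graftL S T) (graftL S T') := by
  induction h with
  | rotate A B C => exact rot.rotate (graftL S A) B C
  | left C _ ih => exact rot.left C ih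
  | right A h => exact rot.right _ h

theorem rot.graftR_left {S S' : PBT} (T : PBT) (h : rot S S') :
    rot (graftR S T) (graftR S' T) := by
  induction h with
  | rotate A B C => exact rot.rotate A B (graftR C T)
  | left C h => exact rot.left _ h
  | right A _ ih => exact rot.right A ih

theorem rot.graftR_right (S : PBT) {T T' : PBT} (h : rot T T') :
    rot (graftR S T) (graftR S T') := by
  induction S with
  | leaf => exact h
  | node l r _ ihr => exact rot.right l ihr

namespace tamari

theorem refl (U : PBT) : tamari U U := Relation.ReflTransGen.refl

theorem trans {U V W : PBT} (h : tamari U V) (h' : tamari V W) : tamari U W :=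
  Relation.ReflTransGen.trans h h'

theorem of_rot {U V : PBT} (h : rot U V) : tamari U V := Relation.ReflTransGen.single h

theorem deg_eq {U V : PBT} (h : tamari U V) : U.deg = V.deg := by
  induction h with
  | refl => rfl
  | tail _ h ih => exact ih.trans h.deg_eq

theorem lift (f : PBT → PBT) (hf : ∀ U V, rot U V → rot (f U) (f V)) {U V : PBT}
    (h : tamari U V) : tamari (f U) (f V) :=
  Relation.ReflTransGen.lift f hf U V h

theorem node {A A' B B' : PBT} (hA : tamari A A') (hB : tamari B B') :
    tamari (PBT.node A B) (PBT.node A' B') :=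
  (hA.lift (PBT.node · B) fun _ _ h => rot.left B h).trans
    (hB.lift (PBT.node A') fun _ _ h => rot.right A' h)

theorem graftL {S S' T T' : PBT} (hS : tamari S S') (hT : tamari T T') :
    tamari (PBT.graftL S T) (PBT.graftL S' T') :=
  (hS.lift (PBT.graftL · T) fun _ _ h => h.graftL_left T).trans
    (hT.lift (PBT.graftL S') fun _ _ h => h.graftL_right S')

theorem graftR {S S' T T' : PBT} (hS : tamari S S') (hT : tamari T T') :
    tamari (PBT.graftR S T) (PBT.graftR S' T') :=
  (hS.lift (PBT.graftR · T) fun _ _ h => h.graftR_left T).trans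
    (hT.lift (PBT.graftR S') fun _ _ h => h.graftR_right S')

end tamari

theorem tamari_node_graftR (X Z W : PBT) :
    tamari (node (graftR X Z) W) (graftR X (node Z W)) := by
  induction X with
  | leaf => exact .refl _
  | node l r _ ihr => exact (tamari.of_rot (rot.rotate l _ W)).trans (.node (.refl l) ihr)

theorem tamari_graftL_node (X Z W : PBT) :
    tamari (graftL (node X Z) W) (node X (graftL Z W)) := by
  induction W with
  | leaf => exact .refl _
  | node l r ihl => exact (tamari.node ihl (.refl r)).trans (.of_rot (rot.rotate X _ r))

/-- For `a ≤ U.deg`, `split a U` is the pair `(S, T)` with `S.deg = a` and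
`S/T ≤ U ≤ S\T`. -/
def split : ℕ → PBT → PBT × PBT
  | _, leaf => (leaf, leaf)
  | a, node l r =>
    if a ≤ deg l then
      ((split a l).1, node (split a l).2 r)
    else
      (node l (split (a - deg l - 1) r).1, (split (a - deg l - 1) r).2)

theorem split_node_of_le {a : ℕ} {l r : PBT} (h : a ≤ l.deg) :
    split a (node l r) = ((split a l).1, node (split a l).2 r) := by
  simp [split, h]

theorem split_node_of_lt {a : ℕ} {l r : PBT} (h : l.deg < a) :
    split a (node l r) =
      (node l (split (a - l.deg - 1) r).1, (split (a - l.deg - 1) r).2) := by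
  simp [split, Nat.not_le.mpr h]

theorem split_zero (U : PBT) : split 0 U = (leaf, U) := by
  induction U with
  | leaf => rfl
  | node l r ihl => simp [split_node_of_le (Nat.zero_le _), ihl]

theorem split_deg_self (U : PBT) : split U.deg U = (U, leaf) := by
  induction U with
  | leaf => rfl
  | node l r _ ihr =>
    rw [split_node_of_lt (by simp only [deg]; omega)]
    simp only [deg, show l.deg + r.deg + 1 - l.deg - 1 = r.deg by omega, ihr]

theorem deg_split {a : ℕ} {U : PBT} (h : a ≤ U.deg) :
    (split a U).1.deg = a ∧ (split a U).2.deg = U.deg - a := by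
  induction U generalizing a with
  | leaf => simp_all [split, deg]
  | node l r ihl ihr =>
    simp only [deg] at h ⊢
    by_cases hl : a ≤ l.deg
    · obtain ⟨h1, h2⟩ := ihl hl
      simp only [split_node_of_le hl, deg, h1, h2, true_and]
      omega
    · obtain ⟨h1, h2⟩ := ihr (a := a - l.deg - 1) (by omega)
      simp only [split_node_of_lt (Nat.lt_of_not_le hl), deg, h1, h2]
      omega

theorem split_graftL {a : ℕ} {S : PBT} (T : PBT) (hS : S.deg = a) :
    split a (graftL S T) = (S, T) := by
  induction T with
  | leaf => rw [graftL, ← hS, split_deg_self]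
  | node l r ihl =>
    rw [graftL, split_node_of_le (by rw [deg_graftL]; omega), ihl]

theorem split_graftR {a : ℕ} {S : PBT} (T : PBT) (hS : S.deg = a) :
    split a (graftR S T) = (S, T) := by
  induction S generalizing a with
  | leaf => rw [graftR, ← hS, deg, split_zero]
  | node l r _ ihr =>
    simp only [deg] at hS
    rw [graftR, split_node_of_lt (by omega), ihr (by omega)]

theorem graftL_split_tamari {a : ℕ} {U : PBT} (h : a ≤ U.deg) :
    tamari (graftL (split a U).1 (split a U).2) U := by
  induction U generalizing a with
  | leaf => simp_all [deg, split_zero, graftL, tamari.refl]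
  | node l r ihl ihr =>
    simp only [deg] at h
    by_cases hl : a ≤ l.deg
    · rw [split_node_of_le hl]
      exact tamari.node (ihl hl) (.refl r)
    · rw [split_node_of_lt (Nat.lt_of_not_le hl)]
      exact (tamari_graftL_node _ _ _).trans (.node (.refl l) (ihr (by omega)))

theorem tamari_graftR_split {a : ℕ} {U : PBT} (h : a ≤ U.deg) :
    tamari U (graftR (split a U).1 (split a U).2) := by
  induction U generalizing a with
  | leaf => simp_all [deg, split_zero, graftR, tamari.refl]
  | node l r ihl ihr =>
    simp only [deg] at h
    by_cases hl : a ≤ l.deg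
    · rw [split_node_of_le hl]
      exact (tamari.node (ihl hl) (.refl r)).trans (tamari_node_graftR _ _ _)
    · rw [split_node_of_lt (Nat.lt_of_not_le hl)]
      exact tamari.node (.refl l) (ihr (by omega))

theorem rot.split_mono {U V : PBT} (h : rot U V) {a : ℕ} (ha : a ≤ U.deg) :
    tamari (split a U).1 (split a V).1 ∧ tamari (split a U).2 (split a V).2 := by
  induction h generalizing a with
  | rotate A B C =>
    simp only [deg] at ha
    by_cases hA : a ≤ A.deg
    · rw [split_node_of_le (by simp only [deg]; omega), split_node_of_le hA,
        split_node_of_le hA]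
      exact ⟨.refl _, .of_rot (rot.rotate _ B C)⟩
    · by_cases hB : a ≤ A.deg + B.deg + 1
      · rw [split_node_of_le (by simp only [deg]; omega), split_node_of_lt (by omega),
          split_node_of_lt (by omega), split_node_of_le (by omega)]
        exact ⟨.refl _, .refl _⟩
      · rw [split_node_of_lt (by simp only [deg]; omega), split_node_of_lt (by omega),
          split_node_of_lt (by omega)]
        simp only [deg, show a - A.deg - 1 - B.deg - 1 = a - (A.deg + B.deg + 1) - 1 by omega]
        exact ⟨.of_rot (rot.rotate A B _), .refl _⟩
  | @left S S' C h ih =>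
    simp only [deg] at ha
    by_cases hS : a ≤ S.deg
    · rw [split_node_of_le hS, split_node_of_le (h.deg_eq ▸ hS)]
      exact ⟨(ih hS).1, .node (ih hS).2 (.refl C)⟩
    · rw [split_node_of_lt (Nat.lt_of_not_le hS),
        split_node_of_lt (h.deg_eq ▸ Nat.lt_of_not_le hS), h.deg_eq]
      exact ⟨.node (.of_rot h) (.refl _), .refl _⟩
  | right A h ih =>
    simp only [deg] at ha
    by_cases hA : a ≤ A.deg
    · rw [split_node_of_le hA, split_node_of_le hA]
      exact ⟨.refl _, .node (.refl _) (.of_rot h)⟩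
    · rw [split_node_of_lt (Nat.lt_of_not_le hA), split_node_of_lt (Nat.lt_of_not_le hA)]
      exact ⟨.node (.refl A) (ih (by omega)).1, (ih (by omega)).2⟩

theorem tamari.split_mono {U V : PBT} (h : tamari U V) {a : ℕ} (ha : a ≤ U.deg) :
    tamari (split a U).1 (split a V).1 ∧ tamari (split a U).2 (split a V).2 := by
  induction h with
  | refl => exact ⟨.refl _, .refl _⟩
  | tail hUV h ih =>
    have h' := h.split_mono (tamari.deg_eq hUV ▸ ha)
    exact ⟨ih.1.trans h'.1, ih.2.trans h'.2⟩

theorem tamari_graftR_iff {a : ℕ} {S T U : PBT} (hS : S.deg = a) (ha : a ≤ U.deg) :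
    tamari U (graftR S T) ↔ tamari (split a U).1 S ∧ tamari (split a U).2 T :=
  ⟨fun h => by simpa only [split_graftR T hS] using h.split_mono ha,
    fun h => (tamari_graftR_split ha).trans (.graftR h.1 h.2)⟩

theorem graftL_tamari_iff {a : ℕ} {S T U : PBT} (hS : S.deg = a) (ha : a ≤ U.deg) :
    tamari (graftL S T) U ↔ tamari S (split a U).1 ∧ tamari T (split a U).2 :=
  ⟨fun h => by
    simpa only [split_graftL T hS] using h.split_mono (a := a) (by rw [deg_graftL]; omega),
    fun h => (tamari.graftL h.1 h.2).trans (graftL_split_tamari ha)⟩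

theorem exists_graftL_of_rot {P Q U : PBT} (h : rot U (graftL P Q)) :
    ∃ P' Q', U = graftL P' Q' ∧ P'.deg = P.deg := by
  induction Q generalizing U with
  | leaf => exact ⟨U, leaf, rfl, h.deg_eq⟩
  | node l r ihl =>
    cases h with
    | rotate A B C => exact ⟨P, node (node l B) C, rfl, rfl⟩
    | left C h =>
      obtain ⟨P', l', rfl, hd⟩ := ihl h
      exact ⟨P', node l' r, rfl, hd⟩
    | right A h => exact ⟨P, node l _, rfl, rfl⟩

theorem exists_graftR_of_rot {P Q U : PBT} (h : rot (graftR P Q) U) :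
    ∃ P' Q', U = graftR P' Q' ∧ P'.deg = P.deg := by
  induction P generalizing U with
  | leaf => exact ⟨leaf, U, rfl, rfl⟩
  | node X Z _ ihZ =>
    cases h with
    | rotate A B C => exact ⟨node A (node B Z), Q, rfl, by simp only [deg]; omega⟩
    | left C h => exact ⟨node _ Z, Q, rfl, by simp only [deg, h.deg_eq]⟩
    | right A h =>
      obtain ⟨Z', Q', rfl, hd⟩ := ihZ h
      exact ⟨node X Z', Q', rfl, by simp only [deg, hd]⟩

theorem exists_graftL_of_tamari {P Q U : PBT} (h : tamari U (graftL P Q)) :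
    ∃ P' Q', U = graftL P' Q' ∧ P'.deg = P.deg := by
  induction h using Relation.ReflTransGen.head_induction_on with
  | refl => exact ⟨P, Q, rfl, rfl⟩
  | head h _ ih =>
    obtain ⟨P', Q', rfl, hd⟩ := ih
    obtain ⟨P'', Q'', rfl, hd'⟩ := exists_graftL_of_rot h
    exact ⟨P'', Q'', rfl, hd'.trans hd⟩

theorem exists_graftR_of_tamari {P Q U : PBT} (h : tamari (graftR P Q) U) :
    ∃ P' Q', U = graftR P' Q' ∧ P'.deg = P.deg := by
  induction h with
  | refl => exact ⟨P, Q, rfl, rfl⟩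
  | tail _ h ih =>
    obtain ⟨P', Q', rfl, hd⟩ := ih
    obtain ⟨P'', Q'', rfl, hd'⟩ := exists_graftR_of_rot h
    exact ⟨P'', Q'', rfl, hd'.trans hd⟩

theorem tamari_graftL_iff {a : ℕ} {S T U : PBT} (hS : S.deg = a) :
    tamari U (graftL S T) ↔
      graftL (split a U).1 (split a U).2 = U ∧
        tamari (split a U).1 S ∧ tamari (split a U).2 T := by
  refine ⟨fun h => ?_, fun ⟨he, h₁, h₂⟩ => he ▸ .graftL h₁ h₂⟩
  obtain ⟨P, Q, rfl, hP⟩ := exists_graftL_of_tamari h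
  have hsplit := h.split_mono (a := a) (by rw [deg_graftL]; omega)
  rw [split_graftL Q (hP.trans hS)] at hsplit ⊢
  rw [split_graftL T hS] at hsplit
  exact ⟨rfl, hsplit⟩

theorem graftR_tamari_iff {a : ℕ} {S T U : PBT} (hS : S.deg = a) :
    tamari (graftR S T) U ↔
      graftR (split a U).1 (split a U).2 = U ∧
        tamari S (split a U).1 ∧ tamari T (split a U).2 := by
  refine ⟨fun h => ?_, fun ⟨he, h₁, h₂⟩ => he ▸ .graftR h₁ h₂⟩
  obtain ⟨P, Q, rfl, hP⟩ := exists_graftR_of_tamari h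
  have hsplit := h.split_mono (a := a) (by rw [deg_graftR]; omega)
  rw [split_graftR Q (hP.trans hS)] at hsplit ⊢
  rw [split_graftR T hS] at hsplit
  exact ⟨rfl, hsplit⟩

theorem tamari_node_leaf_iff {T U : PBT} :
    tamari U (node T leaf) ↔ ∃ T', U = node T' leaf ∧ tamari T' T := by
  refine ⟨fun h => ?_, fun ⟨T', hU, h⟩ => hU ▸ .node h (.refl leaf)⟩
  obtain ⟨hU, hℓ, hr⟩ := (tamari_graftL_iff (T := Y) rfl).mp h
  generalize split _ U = p at hU hℓ hr
  exact ⟨p.1, by rw [← hU, eq_Y_of_deg_eq_one hr.deg_eq]; rfl, hℓ⟩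

theorem node_leaf_tamari_iff {T U : PBT} :
    tamari (node leaf T) U ↔ ∃ T', U = node leaf T' ∧ tamari T T' := by
  refine ⟨fun h => ?_, fun ⟨T', hU, h⟩ => hU ▸ .node (.refl leaf) h⟩
  obtain ⟨hU, hℓ, hr⟩ := (graftR_tamari_iff (S := Y) rfl).mp h
  generalize split _ U = p at hU hℓ hr
  exact ⟨p.2, by rw [← hU, eq_Y_of_deg_eq_one hℓ.deg_eq.symm]; rfl, hr⟩

theorem graftR_ne_graftL_Y {S T : PBT} (hS : 0 < S.deg) (hT : 0 < T.deg) (X : PBT) :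
    graftR S T ≠ graftL X Y := by
  cases S with
  | leaf => simp [deg] at hS
  | node l r =>
    intro h
    injection h with _ h
    have := congrArg deg h
    rw [deg_graftR] at this
    simp only [deg] at this
    omega

theorem graftL_ne_graftR_Y {S T : PBT} (hS : 0 < S.deg) (hT : 0 < T.deg) (X : PBT) :
    graftL S T ≠ graftR Y X := by
  cases T with
  | leaf => simp [deg] at hT
  | node l r =>
    intro h
    injection h with h _
    have := congrArg deg h
    rw [deg_graftL] at this
    simp only [deg] at this
    omega

theorem tamari_node_node_leaf_iff {A B U : PBT} (hU : U.deg = A.deg + B.deg + 2) :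
    tamari U (node (node A B) leaf) ↔
      tamari (split (A.deg + 1) U).1 (node A leaf) ∧
        tamari (split (A.deg + 1) U).2 (node B leaf) ∧
        graftR (split (A.deg + 1) U).1 (split (A.deg + 1) U).2 ≠ U := by
  have ha : A.deg + 1 ≤ U.deg := by omega
  constructor
  · intro h
    rw [← and_assoc]
    refine ⟨(tamari_graftR_iff (S := node A leaf) (T := node B leaf) rfl ha).mp
      (h.trans (.of_rot (rot.rotate A B leaf))), ?_⟩
    obtain ⟨T', rfl, -⟩ := tamari_node_leaf_iff.mp h
    have hdeg := deg_split ha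
    exact graftR_ne_graftL_Y (by omega) (by simp only [deg] at hU hdeg ⊢; omega) T'
  rintro ⟨hℓ, hr, hne⟩
  rcases U with _ | ⟨U₁, U₂⟩
  · simp [deg] at hU
  by_cases hc : A.deg + 1 ≤ U₁.deg
  · rw [split_node_of_le hc] at hℓ hr
    obtain ⟨L, hL, hLA⟩ := tamari_node_leaf_iff.mp hℓ
    obtain ⟨R, hR, hRB⟩ := tamari_node_leaf_iff.mp hr
    injection hR with hR hU₂
    subst hU₂
    have hU₁ := tamari_graftR_split hc
    rw [hL, hR] at hU₁
    exact .node (hU₁.trans (.node hLA hRB)) (.refl leaf)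
  · -- the left piece is `node U₁ leaf`, so `U` is the right graft of its two pieces
    simp only [deg] at hU
    rw [split_node_of_lt (by omega)] at hℓ hne
    obtain ⟨L, hL, -⟩ := tamari_node_leaf_iff.mp hℓ
    injection hL with _ hz
    have hc' := (deg_split (a := A.deg + 1 - U₁.deg - 1) (U := U₂) (by omega)).1
    rw [hz] at hc'
    simp only [deg] at hc'
    rw [hz, ← hc', split_zero] at hne
    exact absurd rfl hne

theorem node_leaf_node_tamari_iff {A B U : PBT} (hU : U.deg = A.deg + B.deg + 2) :
    tamari (node leaf (node A B)) U ↔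
      tamari (node leaf A) (split (A.deg + 1) U).1 ∧
        tamari (node leaf B) (split (A.deg + 1) U).2 ∧
        graftL (split (A.deg + 1) U).1 (split (A.deg + 1) U).2 ≠ U := by
  have ha : A.deg + 1 ≤ U.deg := by omega
  constructor
  · intro h
    rw [← and_assoc]
    refine ⟨(graftL_tamari_iff (S := node leaf A) (T := node leaf B) (by simp [deg]) ha).mp
      ((tamari.of_rot (rot.rotate leaf A B)).trans h), ?_⟩
    obtain ⟨T', rfl, -⟩ := node_leaf_tamari_iff.mp h
    have hdeg := deg_split ha
    exact graftL_ne_graftR_Y (by omega) (by simp only [deg] at hU hdeg ⊢; omega) T'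
  rintro ⟨hℓ, hr, hne⟩
  rcases U with _ | ⟨U₁, U₂⟩
  · simp [deg] at hU
  by_cases hc : A.deg + 1 ≤ U₁.deg
  · -- the right piece is `node leaf U₂`, so `U` is the left graft of its two pieces
    rw [split_node_of_le hc] at hℓ hr hne
    obtain ⟨R, hR, -⟩ := node_leaf_tamari_iff.mp hr
    injection hR with hz hU₂
    subst hU₂
    have hc' := (deg_split hc).2
    rw [hz] at hc'
    simp only [deg] at hc'
    rw [hz, show A.deg + 1 = U₁.deg by omega, split_deg_self] at hne
    exact absurd rfl hne
  · simp only [deg] at hU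
    rw [split_node_of_lt (by omega)] at hℓ hr
    obtain ⟨L, hL, hAL⟩ := node_leaf_tamari_iff.mp hℓ
    obtain ⟨R, hR, hBR⟩ := node_leaf_tamari_iff.mp hr
    injection hL with hU₁ hL
    subst hU₁
    have hU₂ := graftL_split_tamari (a := A.deg + 1 - deg leaf - 1) (U := U₂) (by omega)
    rw [hL, hR] at hU₂
    exact .node (.refl leaf) ((tamari.node hAL hBR).trans hU₂)

def wt : PBT → ℕ
  | leaf => 0
  | node l r => wt l + wt r + deg r

theorem rot.wt_lt {U V : PBT} (h : rot U V) : U.wt < V.wt := by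
  induction h with
  | rotate A B C => simp only [wt, deg]; omega
  | left C h ih => simp only [wt]; omega
  | right A h ih => simp only [wt, h.deg_eq]; omega

theorem tamari.wt_le {U V : PBT} (h : tamari U V) : U.wt ≤ V.wt := by
  induction h with
  | refl => exact le_rfl
  | tail _ h ih => exact ih.trans h.wt_lt.le

theorem tamari.eq_of_wt_le {U V : PBT} (h : tamari U V) (hwt : V.wt ≤ U.wt) : U = V := by
  rcases Relation.ReflTransGen.cases_head h with rfl | ⟨W, hUW, hWV⟩
  · rfl
  · exact absurd (hUW.wt_lt.trans_le (tamari.wt_le hWV)) hwt.not_gt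

def treesOfHeightLE : ℕ → Finset PBT
  | 0 => {leaf}
  | k + 1 => insert leaf ((treesOfHeightLE k ×ˢ treesOfHeightLE k).image fun p => node p.1 p.2)

theorem mem_treesOfHeightLE {T : PBT} {k : ℕ} (h : T.deg ≤ k) : T ∈ treesOfHeightLE k := by
  induction T generalizing k with
  | leaf => cases k <;> simp [treesOfHeightLE]
  | node l r ihl ihr =>
    simp only [deg] at h
    obtain ⟨k, rfl⟩ : ∃ k', k = k' + 1 := Nat.exists_eq_add_one.mpr (by omega)
    simp only [treesOfHeightLE, Finset.mem_insert, Finset.mem_image, Finset.mem_product]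
    exact .inr ⟨(l, r), ⟨ihl (by omega), ihr (by omega)⟩, rfl⟩

def allTrees (n : ℕ) : Finset PBT := (treesOfHeightLE n).filter (·.deg = n)

theorem mem_allTrees {n : ℕ} {T : PBT} : T ∈ allTrees n ↔ T.deg = n := by
  simp only [allTrees, Finset.mem_filter, and_iff_right_iff_imp]
  exact fun h => mem_treesOfHeightLE h.le

/-- Bilinear extension of `op` to vectors supported on trees of degrees `a` and `b`. -/
def bilinGraft (op : PBT → PBT → PBT) (a b : ℕ) (f g : PBT → ℚ) (W : PBT) : ℚ :=
  ∑ P ∈ allTrees a, ∑ Q ∈ allTrees b, if W = op P Q then f P * g Q else 0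

open Classical in
theorem sum_filter_bilinGraft {op : PBT → PBT → PBT}
    (hop : ∀ P Q, (op P Q).deg = P.deg + Q.deg) {a b : ℕ} {p p₁ p₂ : PBT → Prop} {c : Prop}
    (h : ∀ P Q, P.deg = a → Q.deg = b → (p (op P Q) ↔ c ∧ p₁ P ∧ p₂ Q)) (f g : PBT → ℚ) :
    ∑ W ∈ (allTrees (a + b)).filter p, bilinGraft op a b f g W =
      if c then (∑ P ∈ (allTrees a).filter p₁, f P) * ∑ Q ∈ (allTrees b).filter p₂, g Q
      else 0 := by
  have hPQ : ∀ P ∈ allTrees a, ∀ Q ∈ allTrees b,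
      (∑ W ∈ (allTrees (a + b)).filter p, if W = op P Q then f P * g Q else 0) =
        if c then (if p₁ P then f P else 0) * (if p₂ Q then g Q else 0) else 0 := by
    intro P hP Q hQ
    rw [mem_allTrees] at hP hQ
    have hmem : op P Q ∈ (allTrees (a + b)).filter p ↔ c ∧ p₁ P ∧ p₂ Q := by
      rw [Finset.mem_filter, mem_allTrees, hop, hP, hQ, h P Q hP hQ]
      exact and_iff_right rfl
    rw [Finset.sum_ite_eq', if_congr hmem rfl rfl]
    by_cases hc : c <;> by_cases h₁ : p₁ P <;> by_cases h₂ : p₂ Q <;> simp [hc, h₁, h₂]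
  simp only [bilinGraft]
  rw [Finset.sum_comm]
  simp only [Finset.sum_comm (s := (allTrees (a + b)).filter p)]
  rw [Finset.sum_congr rfl fun P hP => Finset.sum_congr rfl (hPQ P hP)]
  split_ifs
  · simp only [Finset.sum_filter, Finset.sum_mul_sum]
  · simp

/-- The column of `K = (Lᵗ)⁻¹ L P` at `T`. -/
def kvec : PBT → PBT → ℚ
  | leaf, W => if W = Y then 1 else 0
  | node A B, W =>
    bilinGraft graftL (A.deg + 1) (B.deg + 1) (kvec A) (kvec B) W -
      bilinGraft graftR (A.deg + 1) (B.deg + 1) (kvec A) (kvec B) W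

open Classical in
theorem sum_kvec_leaf (p : PBT → Prop) :
    ∑ W ∈ (allTrees 1).filter p, kvec leaf W = if p Y then 1 else 0 := by
  simp only [kvec]
  rw [Finset.sum_ite_eq']
  exact if_congr (by simp [mem_allTrees, Y, deg]) rfl rfl

open Classical in
theorem sum_kvec_below (T U : PBT) (hU : U.deg = T.deg + 1) :
    ∑ W ∈ (allTrees (T.deg + 1)).filter (tamari · U), kvec T W =
      if tamari U (node T leaf) then 1 else 0 := by
  induction T generalizing U with
  | leaf =>
    exact (sum_kvec_leaf _).trans (by rw [eq_Y_of_deg_eq_one hU]; rfl)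
  | node A B ihA ihB =>
    have ha : A.deg + 1 ≤ U.deg := by simp only [deg] at hU; omega
    obtain ⟨hℓ, hr⟩ := deg_split ha
    simp only [deg] at hU hr
    simp only [kvec, Finset.sum_sub_distrib, deg,
      show A.deg + B.deg + 1 + 1 = (A.deg + 1) + (B.deg + 1) by omega]
    rw [sum_filter_bilinGraft deg_graftL (c := True)
        (fun P Q hP _ => (graftL_tamari_iff hP ha).trans (iff_of_eq (true_and _)).symm),
      sum_filter_bilinGraft deg_graftR
        (fun P Q hP _ => graftR_tamari_iff (U := U) hP),
      ihA _ hℓ, ihB _ (by omega), tamari_node_node_leaf_iff (by omega)]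
    split_ifs <;> simp_all

open Classical in
theorem sum_kvec_above (T U : PBT) (hU : U.deg = T.deg + 1) :
    ∑ W ∈ (allTrees (T.deg + 1)).filter (tamari U ·), kvec T W =
      (-1) ^ T.deg * if tamari (node leaf T) U then 1 else 0 := by
  induction T generalizing U with
  | leaf =>
    exact (sum_kvec_leaf _).trans (by simp [eq_Y_of_deg_eq_one hU, deg, Y, tamari.refl])
  | node A B ihA ihB =>
    have ha : A.deg + 1 ≤ U.deg := by simp only [deg] at hU; omega
    obtain ⟨hℓ, hr⟩ := deg_split ha
    simp only [deg] at hU hr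
    simp only [kvec, Finset.sum_sub_distrib, deg,
      show A.deg + B.deg + 1 + 1 = (A.deg + 1) + (B.deg + 1) by omega]
    rw [sum_filter_bilinGraft deg_graftL
        (fun P Q hP _ => tamari_graftL_iff (U := U) hP),
      sum_filter_bilinGraft deg_graftR (c := True)
        (fun P Q hP _ => (tamari_graftR_iff hP ha).trans (iff_of_eq (true_and _)).symm),
      ihA _ hℓ, ihB _ (by omega), node_leaf_node_tamari_iff (by omega)]
    split_ifs <;> simp_all [pow_succ, pow_add]

end PBT

theorem Lmat_det_isUnit (m : ℕ) [Fintype (PBTdeg m)] : IsUnit (Lmat m).det := by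
  classical
  have htri : (Lmat m).BlockTriangular fun v => v.1.wt := fun v w hwt => by
    simp only [Lmat, Matrix.of_apply, ite_eq_right_iff, one_ne_zero, imp_false]
    exact fun h => hwt.not_ge h.wt_le
  rw [htri.det_eq_one fun v w hvw => ?_]
  · exact isUnit_one
  by_cases h : PBT.tamari v.1 w.1
  · have := Subtype.ext (h.eq_of_wt_le hvw.ge)
    subst this
    simp [Lmat, h]
  · simp only [Lmat, Matrix.of_apply, if_neg h, Matrix.one_apply]
    exact (if_neg fun hvw' : v = w => h (hvw' ▸ .refl v.1)).symm

theorem sum_PBTdeg_eq_sum_allTrees (m : ℕ) [Fintype (PBTdeg m)] (f : PBT → ℚ) :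
    ∑ W : PBTdeg m, f W.1 = ∑ W ∈ PBT.allTrees m, f W :=
  (Finset.sum_subtype _ (fun _ => PBT.mem_allTrees) f).symm

open Classical in
noncomputable def relMat (m : ℕ) [Fintype (PBTdeg m)] (R : PBT → PBT → Prop) :
    Matrix (PBTdeg m) (PBTdeg m) ℚ :=
  Matrix.of fun v w => if R v.1 w.1 then 1 else 0

def graftMat (n : ℕ) (φ : PBT → PBT) :
    Matrix (PBTdeg (n + 1)) (PBTdeg n) ℚ :=
  Matrix.of fun U T => if U.1 = φ T.1 then 1 else 0

def kMat (n : ℕ) : Matrix (PBTdeg (n + 1)) (PBTdeg n) ℚ :=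
  Matrix.of fun U T => PBT.kvec T.1 U.1

section Matrices

open PBT

variable {n : ℕ}

theorem mul_graftMat_apply [Fintype (PBTdeg (n + 1))] {ι : Type*}
    (M : Matrix ι (PBTdeg (n + 1)) ℚ) {φ : PBT → PBT} (hφ : ∀ T, (φ T).deg = T.deg + 1)
    (i : ι) (T : PBTdeg n) :
    (M * graftMat n φ) i T = M i ⟨φ T.1, by rw [hφ, T.2]⟩ := by
  simp only [Matrix.mul_apply, graftMat, Matrix.of_apply, mul_ite, mul_one, mul_zero]
  rw [Fintype.sum_eq_single ⟨φ T.1, _⟩ fun j hj => if_neg fun h => hj (Subtype.ext h)]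
  exact if_pos rfl

theorem graftMat_mulVec_delta [Fintype (PBTdeg n)] (φ : PBT → PBT) {T : PBT} (hT : T.deg = n) :
    (graftMat n φ).mulVec (delta n T) = delta (n + 1) (φ T) := by
  ext U
  simp only [Matrix.mulVec, dotProduct, graftMat, Matrix.of_apply, delta, mul_ite, mul_one,
    mul_zero]
  rw [Fintype.sum_eq_single ⟨T, hT⟩ fun S hS => if_neg fun h => hS (Subtype.ext h)]
  simp

theorem Ygr_eq_graftMat_mulVec [Fintype (PBTdeg n)] (f : PBTdeg n → ℚ) :
    Ygr n f = (graftMat n (graftR Y)).mulVec f := by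
  ext U
  simp only [Ygr, Matrix.mulVec, dotProduct, graftMat, Matrix.of_apply, mul_comm]

theorem relMat_mul_graftMat [Fintype (PBTdeg n)] [Fintype (PBTdeg (n + 1))]
    {R : PBT → PBT → Prop} {φ : PBT → PBT} (hφ : ∀ T, (φ T).deg = T.deg + 1) (hinj : φ.Injective)
    (hR : ∀ T U, R U (φ T) ↔ ∃ T', U = φ T' ∧ R T' T) :
    relMat (n + 1) R * graftMat n φ = graftMat n φ * relMat n R := by
  classical
  ext U T
  rw [mul_graftMat_apply _ hφ, Matrix.mul_apply]
  simp only [relMat, graftMat, Matrix.of_apply, ite_mul, one_mul, zero_mul]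
  by_cases h : R U.1 (φ T.1)
  · obtain ⟨T', hU, hT'⟩ := (hR _ _).mp h
    have hdeg : T'.deg = n := by have := U.2; rw [hU, hφ] at this; omega
    rw [if_pos h, Fintype.sum_eq_single ⟨T', hdeg⟩ fun S hS => if_neg fun h' =>
      hS (Subtype.ext (hinj (h'.symm.trans hU)))]
    simp [hU, hT']
  · rw [if_neg h]
    refine (Finset.sum_eq_zero fun S _ => ?_).symm
    split_ifs with hU hST
    · exact absurd ((hR _ _).mpr ⟨S.1, hU, hST⟩) h
    all_goals rfl

theorem Lmat_mul_graftMat [Fintype (PBTdeg n)] [Fintype (PBTdeg (n + 1))] :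
    Lmat (n + 1) * graftMat n (graftL · Y) = graftMat n (graftL · Y) * Lmat n :=
  relMat_mul_graftMat (fun _ => rfl) (fun _ _ h => node.inj h |>.1)
    fun _ _ => tamari_node_leaf_iff

theorem Lmat_transpose_mul_graftMat [Fintype (PBTdeg n)] [Fintype (PBTdeg (n + 1))] :
    (Lmat (n + 1)).transpose * graftMat n (graftR Y) =
      graftMat n (graftR Y) * (Lmat n).transpose :=
  relMat_mul_graftMat (R := flip tamari) (fun _ => by simp [graftR, Y, deg])
    (fun _ _ h => node.inj h |>.2) fun _ _ => node_leaf_tamari_iff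

theorem Lmat_transpose_mul_kMat [Fintype (PBTdeg (n + 1))] :
    (Lmat (n + 1)).transpose * kMat n = Lmat (n + 1) * graftMat n (graftL · Y) := by
  classical
  ext U T
  rw [mul_graftMat_apply _ (fun _ => rfl), Matrix.mul_apply]
  have hsum := sum_kvec_below T.1 U.1 (by rw [U.2, T.2])
  rw [T.2, Finset.sum_filter, ← sum_PBTdeg_eq_sum_allTrees (n + 1)] at hsum
  simp only [Matrix.transpose_apply, Lmat, kMat, Matrix.of_apply, ite_mul, one_mul, zero_mul]
  exact hsum

theorem Lmat_mul_kMat [Fintype (PBTdeg (n + 1))] :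
    Lmat (n + 1) * kMat n =
      (-1 : ℚ) ^ n • ((Lmat (n + 1)).transpose * graftMat n (graftR Y)) := by
  classical
  ext U T
  rw [Matrix.smul_apply, mul_graftMat_apply _ (fun _ => by simp [graftR, Y, deg]),
    Matrix.mul_apply]
  have hsum := sum_kvec_above T.1 U.1 (by rw [U.2, T.2])
  rw [T.2, Finset.sum_filter, ← sum_PBTdeg_eq_sum_allTrees (n + 1)] at hsum
  simp only [Lmat, kMat, Matrix.transpose_apply, Matrix.of_apply, ite_mul, one_mul, zero_mul,
    smul_eq_mul]
  exact hsum

end Matrices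

open PBT in
/-- `θ(T/Y) = (-1)ⁿ Y\θ⁻¹(T)` for every tree `T` of degree `n`. -/
theorem theta_graftL_Y (n : ℕ) [Fintype (PBTdeg n)] [Fintype (PBTdeg (n + 1))]
    (T : PBT) (h : T.deg = n) :
    (thetaMat (n + 1)).mulVec (delta (n + 1) (graftL T Y)) =
      ((-1 : ℚ) ^ n) • Ygr n ((thetaMat n)⁻¹.mulVec (delta n T)) := by
  have key : thetaMat (n + 1) * graftMat n (graftL · Y) =
      (-1 : ℚ) ^ n • (graftMat n (graftR Y) * (thetaMat n)⁻¹) :=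
    coxeter_mul_eq_smul_mul_inv (Lmat_det_isUnit _) (Lmat_det_isUnit _) Lmat_transpose_mul_kMat
      Lmat_mul_kMat Lmat_mul_graftMat Lmat_transpose_mul_graftMat
  rw [← graftMat_mulVec_delta (graftL · Y) h, Matrix.mulVec_mulVec, key, Matrix.smul_mulVec,
    ← Matrix.mulVec_mulVec, Ygr_eq_graftMat_mulVec]
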